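/- For a standard Gaussian vector γ in R^p, any unit vector a in R^p, u ∈ R^p, and z > 0: E[|γᵀa|² exp(‖γ - u‖²/4)] ≤ (2 + |uᵀa|²) exp(p/2 + ‖u‖²/2). -/

import Mathlib

/-!
Completing the square, `-x² / 2 + (x - c)² / 4 = -(x + c)² / 4 + c² / 2`, shows that the standard
Gaussian tilted by `exp ((x - c)² / 4)` is `√2 exp (c² / 2)` times `N(-c, 2)`. Coordinatewise, the
expectation therefore equals `2^(p/2) exp (‖u‖² / 2) E[(ηᵀa)²]` with `η ~ N(-u, 2 I)`, and
`E[(ηᵀa)²] = 2 ‖a‖² + (uᵀa)² = 2 + (uᵀa)²`. Finally `2^(p/2) ≤ exp (p / 2)`.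
-/

open MeasureTheory ProbabilityTheory Real
open scoped ENNReal NNReal

namespace MeasureTheory

variable {ι : Type*} [Fintype ι] {α : ι → Type*} [∀ i, MeasurableSpace (α i)]
  (μ : ∀ i, Measure (α i)) [∀ i, IsProbabilityMeasure (μ i)]

lemma lintegral_fintype_prod_eq_prod {f : ∀ i, α i → ℝ≥0∞} (hf : ∀ i, Measurable (f i)) :
    ∫⁻ x, ∏ i, f i (x i) ∂Measure.pi μ = ∏ i, ∫⁻ y, f i y ∂μ i := by
  rw [lintegral_prod_eq_prod_lintegral_of_indepFun _ _ (iIndepFun_pi fun i => (hf i).aemeasurable)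
    fun i => (hf i).comp (measurable_pi_apply i)]
  exact Finset.prod_congr rfl fun i _ => (measurePreserving_eval μ i).lintegral_comp (hf i)

lemma Measure.pi_withDensity {f : ∀ i, α i → ℝ≥0∞} (hf : ∀ i, Measurable (f i))
    [∀ i, SigmaFinite ((μ i).withDensity (f i))] :
    Measure.pi (fun i => (μ i).withDensity (f i)) =
      (Measure.pi μ).withDensity fun x => ∏ i, f i (x i) := by
  refine pi_eq fun s hs => ?_
  have hind : (Set.univ.pi s).indicator (fun x => ∏ i, f i (x i)) =
      fun x => ∏ i, (s i).indicator (f i) (x i) := by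
    ext x
    by_cases hx : x ∈ Set.univ.pi s
    · rw [Set.indicator_of_mem hx]
      exact Finset.prod_congr rfl fun i _ => (Set.indicator_of_mem (hx i trivial) (f i)).symm
    · obtain ⟨i, hi⟩ : ∃ i, x i ∉ s i := by simpa [Set.mem_pi] using hx
      rw [Set.indicator_of_notMem hx,
        Finset.prod_eq_zero (Finset.mem_univ i) (Set.indicator_of_notMem hi _)]
  rw [withDensity_apply _ (MeasurableSet.univ_pi hs),
    ← lintegral_indicator (MeasurableSet.univ_pi hs), hind,
    lintegral_fintype_prod_eq_prod μ fun i => (hf i).indicator (hs i)]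
  exact Finset.prod_congr rfl fun i _ => by rw [lintegral_indicator (hs i), withDensity_apply _ (hs i)]

lemma integral_pi_withDensity_ofReal {ρ : ∀ i, α i → ℝ} (hρ : ∀ i, Measurable (ρ i))
    (hρ₀ : ∀ i y, 0 ≤ ρ i y) (G : (∀ i, α i) → ℝ) :
    ∫ x, G x ∂Measure.pi (fun i => (μ i).withDensity fun y => ENNReal.ofReal (ρ i y)) =
      ∫ x, (∏ i, ρ i (x i)) * G x ∂Measure.pi μ := by
  rw [Measure.pi_withDensity μ fun i => (hρ i).ennreal_ofReal,
    integral_withDensity_eq_integral_toReal_smul (by fun_prop)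
      (ae_of_all _ fun x => ENNReal.prod_lt_top fun i _ => ENNReal.ofReal_lt_top)]
  simp_rw [ENNReal.toReal_prod, ENNReal.toReal_ofReal (hρ₀ _ _), smul_eq_mul]

end MeasureTheory

lemma integral_sq_sum_mul_pi {ι : Type*} [Fintype ι] {μ : ι → Measure ℝ}
    [∀ i, IsProbabilityMeasure (μ i)] (hμ : ∀ i, MemLp id 2 (μ i)) (a : ι → ℝ) :
    ∫ x, (∑ i, x i * a i) ^ 2 ∂Measure.pi μ =
      ∑ i, a i ^ 2 * Var[id; μ i] + (∑ i, (∫ t, t ∂μ i) * a i) ^ 2 := by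
  have hX : ∀ i, MemLp (fun t : ℝ => t * a i) 2 (μ i) := fun i => (hμ i).mul_const (a i)
  have hXpi : ∀ i, MemLp (fun x : ι → ℝ => x i * a i) 2 (Measure.pi μ) := fun i =>
    (hX i).comp_measurePreserving (measurePreserving_eval μ i)
  have hsum : (fun x : ι → ℝ => ∑ i, x i * a i) = ∑ i, fun x => x i * a i := by
    ext x; simp
  have hvar : Var[fun x : ι → ℝ => ∑ i, x i * a i; Measure.pi μ] =
      ∑ i, a i ^ 2 * Var[id; μ i] := by
    rw [hsum, variance_sum_pi hX]
    exact Finset.sum_congr rfl fun i _ => (variance_mul_const (a i) id (μ i)).trans (mul_comm _ _)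
  have hmean : ∫ x, ∑ i, x i * a i ∂Measure.pi μ = ∑ i, (∫ t, t ∂μ i) * a i := by
    rw [integral_finsetSum _ fun i _ => (hXpi i).integrable one_le_two]
    exact Finset.sum_congr rfl fun i _ => by rw [integral_mul_const, integral_eval]
  rw [← hvar, variance_eq_sub (hsum ▸ memLp_finsetSum' _ fun i _ => hXpi i), hmean]
  simp only [sub_add_cancel, Pi.pow_apply]

lemma gaussianReal_withDensity_exp_sq (c : ℝ) :
    (gaussianReal 0 1).withDensity
        (fun x => ENNReal.ofReal (exp ((x - c) ^ 2 / 4) / (√2 * exp (c ^ 2 / 2)))) =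
      gaussianReal (-c) 2 := by
  rw [gaussianReal_of_var_ne_zero 0 one_ne_zero, gaussianReal_of_var_ne_zero _ two_ne_zero,
    ← withDensity_mul _ (measurable_gaussianPDF _ _) (by fun_prop)]
  congr 1
  ext x
  rw [Pi.mul_apply, gaussianPDF, gaussianPDF, ← ENNReal.ofReal_mul (gaussianPDFReal_nonneg _ _ _)]
  congr 1
  have hsqrt : √(2 * π * 2) = √2 * √(2 * π) := by
    rw [← sqrt_mul zero_le_two]; ring_nf
  simp only [gaussianPDFReal, NNReal.coe_one, NNReal.coe_ofNat, mul_one]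
  rw [hsqrt]
  field_simp
  rw [← exp_add, ← exp_add]
  ring_nf

lemma integral_mul_exp_sq_div_four_gaussianReal_pi {ι : Type*} [Fintype ι] (u : ι → ℝ)
    (G : (ι → ℝ) → ℝ) :
    ∫ x, G x * exp ((∑ i, (x i - u i) ^ 2) / 4) ∂Measure.pi (fun _ => gaussianReal 0 1) =
      √2 ^ Fintype.card ι * exp ((∑ i, u i ^ 2) / 2) *
        ∫ x, G x ∂Measure.pi fun i => gaussianReal (-u i) 2 := by
  set C : ι → ℝ := fun i => √2 * exp (u i ^ 2 / 2)
  set ρ : ι → ℝ → ℝ := fun i y => exp ((y - u i) ^ 2 / 4) / C i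
  have hC : ∏ i, C i = √2 ^ Fintype.card ι * exp ((∑ i, u i ^ 2) / 2) := by
    rw [Finset.prod_mul_distrib, Finset.prod_const, Finset.card_univ, Finset.sum_div, exp_sum]
  have hpt : ∀ x : ι → ℝ,
      G x * exp ((∑ i, (x i - u i) ^ 2) / 4) = (∏ i, C i) * ((∏ i, ρ i (x i)) * G x) := by
    intro x
    have hC₀ : ∏ i, C i ≠ 0 := Finset.prod_ne_zero_iff.2 fun i _ => by positivity
    rw [Finset.sum_div, exp_sum, Finset.prod_div_distrib]
    field_simp
  have htilt : (fun i => (gaussianReal 0 1).withDensity fun y => ENNReal.ofReal (ρ i y)) =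
      fun i => gaussianReal (-u i) 2 :=
    funext fun i => gaussianReal_withDensity_exp_sq (u i)
  rw [integral_congr_ae (ae_of_all _ hpt), integral_const_mul, hC, ← htilt,
    integral_pi_withDensity_ofReal _ (fun i => by fun_prop) (fun i y => by positivity)]

lemma sqrt_two_pow_le_exp (n : ℕ) : √2 ^ n ≤ exp (n / 2) := by
  have h : √2 ≤ exp (1 / 2) := by
    rw [exp_half]
    exact sqrt_le_sqrt (by linarith [add_one_le_exp 1])
  calc √2 ^ n ≤ exp (1 / 2) ^ n := by gcongr
    _ = exp (n / 2) := by rw [← exp_nat_mul]; ring_nf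

theorem gauss_quad_exp_bound_general (p : ℕ) (u a : Fin p → ℝ) (ha : ∑ i, a i ^ 2 = 1) :
    ∫ x, (∑ i, x i * a i) ^ 2 * Real.exp ((∑ i, (x i - u i) ^ 2) / 4)
        ∂(Measure.pi fun _ : Fin p => gaussianReal 0 1) ≤
      (2 + (∑ i, u i * a i) ^ 2) * Real.exp ((p : ℝ) / 2 + (∑ i, u i ^ 2) / 2) := by
  rw [integral_mul_exp_sq_div_four_gaussianReal_pi,
    integral_sq_sum_mul_pi (fun i => memLp_id_gaussianReal 2)]
  simp only [variance_id_gaussianReal, integral_id_gaussianReal, Fintype.card_fin]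
  have hsecond : ∑ i, a i ^ 2 * ((2 : ℝ≥0) : ℝ) + (∑ i, -u i * a i) ^ 2 =
      2 + (∑ i, u i * a i) ^ 2 := by
    rw [← Finset.sum_mul, ha]
    simp [neg_mul, Finset.sum_neg_distrib]
  rw [hsecond, exp_add]
  calc √2 ^ p * exp ((∑ i, u i ^ 2) / 2) * (2 + (∑ i, u i * a i) ^ 2)
      ≤ exp (p / 2) * exp ((∑ i, u i ^ 2) / 2) * (2 + (∑ i, u i * a i) ^ 2) := by
        gcongr; exact sqrt_two_pow_le_exp p
    _ = _ := by ring

/-- For a standard Gaussian vector `γ` in `ℝ^p`, a unit vector `a`, `u ∈ ℝ^p` and `z > 0`: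
`E[|γᵀa|² exp(‖γ - u‖²/4)] ≤ (2 + |uᵀa|²) exp(p/2 + ‖u‖²/2)`. -/
theorem gauss_quad_exp_bound (p : ℕ) (u a : Fin p → ℝ) (ha : ∑ i, a i ^ 2 = 1)
    (z : ℝ) (hz : 0 < z) :
    ∫ x, (∑ i, x i * a i) ^ 2 * Real.exp ((∑ i, (x i - u i) ^ 2) / 4)
        ∂(Measure.pi fun _ : Fin p => gaussianReal 0 1) ≤
      (2 + (∑ i, u i * a i) ^ 2) * Real.exp ((p : ℝ) / 2 + (∑ i, u i ^ 2) / 2) :=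
  gauss_quad_exp_bound_general p u a ha
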